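/- There exists a constant C > 0 such that for all reals D and Δ with 0 < Δ ≤ D/2, if n = ⌈C·(D/Δ)·log(D/Δ)⌉ and α₁, …, αₙ are independent random angles each uniformly distributed on [0, 2π), then with probability at least 1 − 1/n the following holds: for every point p ∈ ℝ² with ‖p‖ = D, at least one of the rays from the origin at angles α₁, …, αₙ intersects the closed ball of radius Δ/2 centered at p. -/

import Mathlib

/-! Split `[0, 2π)` into `m = ⌈4π D/Δ⌉` equal arcs. If every arc contains a spoke angle, every
point `p` with `‖p‖ = D` is within angle `2π/m` of some spoke, and since a chord is shorter than
its arc, the point at distance `D` along that spoke is within `D · 2π/m ≤ Δ/2` of `p`. A fixed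
arc is missed by all `n` independent uniform spokes with probability `(1 - 1/m)^n ≤ e^{-n/m}`,
so by the union bound some arc is missed with probability at most `m e^{-n/m}`, which is at most
`1/n` once `n ≥ 1000 (D/Δ) log (D/Δ)`. -/

open MeasureTheory ProbabilityTheory

noncomputable def rayDir (α : ℝ) : EuclideanSpace ℝ (Fin 2) :=
  (EuclideanSpace.equiv (Fin 2) ℝ).symm ![Real.cos α, Real.sin α]

open Real

open Complex in
lemma rayDir_eq_repr_exp (θ : ℝ) : rayDir θ = orthonormalBasisOneI.repr (exp (θ * I)) := by
  ext i; fin_cases i <;> simp [rayDir, exp_ofReal_mul_I_re, exp_ofReal_mul_I_im]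

lemma rayDir_periodic : Function.Periodic rayDir (2 * π) := by
  intro θ; simp [rayDir]

open Complex in
lemma norm_rayDir_sub_rayDir_le (a b : ℝ) : ‖rayDir a - rayDir b‖ ≤ |a - b| := by
  have hsplit : exp (a * I) - exp (b * I) = exp (b * I) * (exp (I * (a - b : ℝ)) - 1) := by
    rw [mul_sub, ← Complex.exp_add]; push_cast; ring_nf
  calc ‖rayDir a - rayDir b‖ = ‖exp (a * I) - exp (b * I)‖ := by
        rw [rayDir_eq_repr_exp, rayDir_eq_repr_exp, ← map_sub, LinearIsometryEquiv.norm_map]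
    _ ≤ |a - b| := by
        rw [hsplit, norm_mul, norm_exp_ofReal_mul_I, one_mul]
        exact Real.norm_exp_I_mul_ofReal_sub_one_le

open Complex in
lemma exists_eq_norm_smul_rayDir (p : EuclideanSpace ℝ (Fin 2)) : ∃ θ, p = ‖p‖ • rayDir θ := by
  set z := orthonormalBasisOneI.repr.symm p
  refine ⟨arg z, ?_⟩
  have hz : ‖z‖ = ‖p‖ := LinearIsometryEquiv.norm_map _ _
  rw [rayDir_eq_repr_exp, ← hz, ← map_smul, real_smul, norm_mul_exp_arg_mul_I,
    LinearIsometryEquiv.apply_symm_apply]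

lemma one_sub_one_div_natCast_nonneg (m : ℕ) : 0 ≤ 1 - 1 / (m : ℝ) := by
  simpa only [one_div, sub_nonneg] using Nat.cast_inv_le_one m

noncomputable def arc (m j : ℕ) : Set ℝ := Set.Ico (j * (2 * π / m)) ((j + 1) * (2 * π / m))

lemma measurableSet_arc (m j : ℕ) : MeasurableSet (arc m j) := measurableSet_Ico

lemma arc_subset_Ico {m j : ℕ} (hj : j < m) : arc m j ⊆ Set.Ico 0 (2 * π) := by
  have hm : (0 : ℝ) < m := by exact_mod_cast j.zero_le.trans_lt hj
  have hj' : (j : ℝ) + 1 ≤ m := by exact_mod_cast hj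
  refine Set.Ico_subset_Ico (by positivity) ?_
  calc (j + 1) * (2 * π / m) ≤ m * (2 * π / m) := by gcongr
    _ = 2 * π := by field_simp

lemma volume_arc (m j : ℕ) : volume (arc m j) = ENNReal.ofReal (2 * π / m) := by
  rw [arc, Real.volume_Ico]
  congr 1
  ring

lemma abs_sub_lt_of_mem_arc {m j : ℕ} {a b : ℝ} (ha : a ∈ arc m j) (hb : b ∈ arc m j) :
    |a - b| < 2 * π / m := by
  rw [abs_sub_lt_iff]
  constructor <;> linarith [ha.1, ha.2, hb.1, hb.2]

lemma exists_mem_arc {m : ℕ} (hm : 0 < m) {θ : ℝ} (hθ : θ ∈ Set.Ico 0 (2 * π)) :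
    ∃ j < m, θ ∈ arc m j := by
  have hw : 0 < 2 * π / m := by positivity
  have hq : 0 ≤ θ / (2 * π / m) := div_nonneg hθ.1 hw.le
  refine ⟨⌊θ / (2 * π / m)⌋₊, ?_, ?_, ?_⟩
  · rw [Nat.floor_lt hq, div_lt_iff₀ hw]
    field_simp
    exact hθ.2
  · exact (le_div_iff₀ hw).1 (Nat.floor_le hq)
  · exact (div_lt_iff₀ hw).1 (Nat.lt_floor_add_one _)

lemma exists_smul_rayDir_mem_closedBall_of_forall_arc {ι : Type*} (angles : ι → ℝ) {m : ℕ}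
    (hm : 0 < m) (hhit : ∀ j < m, ∃ i, angles i ∈ arc m j) {p : EuclideanSpace ℝ (Fin 2)}
    {Δ : ℝ} (hmΔ : 4 * π * ‖p‖ ≤ m * Δ) :
    ∃ i, ∃ t : ℝ, 0 ≤ t ∧ t • rayDir (angles i) ∈ Metric.closedBall p (Δ / 2) := by
  obtain ⟨θ₀, hpθ₀⟩ := exists_eq_norm_smul_rayDir p
  obtain ⟨θ, hθ, hθ₀⟩ := rayDir_periodic.exists_mem_Ico₀ two_pi_pos θ₀
  obtain ⟨j, hj, hθj⟩ := exists_mem_arc hm hθ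
  obtain ⟨i, hij⟩ := hhit j hj
  refine ⟨i, ‖p‖, norm_nonneg p, ?_⟩
  have hm' : (0 : ℝ) < m := by exact_mod_cast hm
  rw [Metric.mem_closedBall, dist_eq_norm]
  nth_rw 2 [hpθ₀]
  rw [hθ₀, ← smul_sub, norm_smul, norm_norm]
  calc ‖p‖ * ‖rayDir (angles i) - rayDir θ‖ ≤ ‖p‖ * (2 * π / m) := by
        gcongr
        exact (norm_rayDir_sub_rayDir_le _ _).trans (abs_sub_lt_of_mem_arc hij hθj).le
    _ ≤ Δ / 2 := by
        rw [mul_div_assoc', div_le_iff₀ hm']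
        linarith

lemma measure_preimage_eq_of_map_eq_uniform {Ω : Type*} [MeasurableSpace Ω] {μ : Measure Ω}
    {X : Ω → ℝ} (hX : Measurable X) {L : ℝ}
    (hmap : μ.map X = (ENNReal.ofReal L)⁻¹ • volume.restrict (Set.Ico 0 L))
    {s : Set ℝ} (hs : MeasurableSet s) (hsL : s ⊆ Set.Ico 0 L) :
    μ (X ⁻¹' s) = (ENNReal.ofReal L)⁻¹ * volume s := by
  rw [← Measure.map_apply hX hs, hmap, Measure.smul_apply, Measure.restrict_apply hs,
    Set.inter_eq_self_of_subset_left hsL, smul_eq_mul]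

lemma measure_iInter_preimage_compl_eq_pow {Ω ι β : Type*} [MeasurableSpace Ω] [Fintype ι]
    [MeasurableSpace β] {μ : Measure Ω} [IsProbabilityMeasure μ] {X : ι → Ω → β}
    (hX : ∀ i, Measurable (X i)) (hind : iIndepFun X μ) {s : Set β} (hs : MeasurableSet s)
    {q : ENNReal} (hq : ∀ i, μ (X i ⁻¹' s) = q) :
    μ (⋂ i, X i ⁻¹' sᶜ) = (1 - q) ^ Fintype.card ι := by
  rw [hind.meas_iInter fun i => ⟨sᶜ, hs.compl, rfl⟩]
  simp only [Set.preimage_compl, prob_compl_eq_one_sub (hX _ hs), hq, Finset.prod_const,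
    Finset.card_univ]

lemma measure_exists_arc_unhit_le {Ω ι : Type*} [MeasurableSpace Ω] [Fintype ι] {μ : Measure Ω}
    [IsProbabilityMeasure μ] {α : ι → Ω → ℝ} (hα : ∀ i, Measurable (α i)) (hind : iIndepFun α μ)
    (hunif : ∀ i, μ.map (α i) = (ENNReal.ofReal (2 * π))⁻¹ • volume.restrict (Set.Ico 0 (2 * π)))
    (m : ℕ) :
    μ (⋃ j : Fin m, ⋂ i, α i ⁻¹' (arc m j)ᶜ) ≤
      ENNReal.ofReal (m * (1 - 1 / m) ^ Fintype.card ι) := by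
  have hhit : ∀ (j : Fin m) i, μ (α i ⁻¹' arc m j) = ENNReal.ofReal (1 / m) := fun j i => by
    rw [measure_preimage_eq_of_map_eq_uniform (hα i) (hunif i) (measurableSet_arc m j)
      (arc_subset_Ico j.isLt), volume_arc, ← ENNReal.ofReal_inv_of_pos two_pi_pos,
      ← ENNReal.ofReal_mul (by positivity)]
    congr 1
    field_simp
  calc μ (⋃ j : Fin m, ⋂ i, α i ⁻¹' (arc m j)ᶜ)
      ≤ ∑ j : Fin m, μ (⋂ i, α i ⁻¹' (arc m j)ᶜ) := measure_iUnion_fintype_le _ _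
    _ = ∑ _j : Fin m, ENNReal.ofReal ((1 - 1 / m) ^ Fintype.card ι) := by
        refine Finset.sum_congr rfl fun j _ => ?_
        rw [measure_iInter_preimage_compl_eq_pow hα hind (measurableSet_arc m j) (hhit j),
          ENNReal.ofReal_pow (one_sub_one_div_natCast_nonneg m),
          ENNReal.ofReal_sub _ (by positivity), ENNReal.ofReal_one]
    _ = ENNReal.ofReal (m * (1 - 1 / m) ^ Fintype.card ι) := by
        rw [Finset.sum_const, Finset.card_univ, Fintype.card_fin, nsmul_eq_mul,
          ENNReal.ofReal_mul (Nat.cast_nonneg m), ENNReal.ofReal_natCast]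

lemma mul_one_sub_one_div_pow_le_one_div {m n : ℕ} (hn : 0 < n)
    (h : (m : ℝ) * n ≤ exp (n / m)) : (m : ℝ) * (1 - 1 / m) ^ n ≤ 1 / n := by
  have hn' : (0 : ℝ) < n := by exact_mod_cast hn
  have hpow : (1 - 1 / m : ℝ) ^ n ≤ exp (-(n / m)) := by
    calc (1 - 1 / m : ℝ) ^ n ≤ exp (-(1 / m)) ^ n := by
          gcongr
          · exact one_sub_one_div_natCast_nonneg m
          · linarith [add_one_le_exp (-(1 / m : ℝ))]
      _ = exp (-(n / m)) := by rw [← exp_nat_mul]; ring_nf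
  calc (m : ℝ) * (1 - 1 / m) ^ n ≤ m * exp (-(n / m)) := by gcongr
    _ ≤ 1 / n := by
        rw [exp_neg, ← div_eq_mul_inv, div_le_div_iff₀ (exp_pos _) hn']
        linarith

lemma natCeil_mul_natCeil_le_exp_div {x : ℝ} (hx : 2 ≤ x) :
    (⌈4 * π * x⌉₊ : ℝ) * ⌈1000 * x * log x⌉₊ ≤
      exp (⌈1000 * x * log x⌉₊ / ⌈4 * π * x⌉₊) := by
  set m := ⌈4 * π * x⌉₊
  set n := ⌈1000 * x * log x⌉₊
  have hlog : 0.69 ≤ log x := by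
    have := log_le_log (by norm_num) hx
    linarith [log_two_gt_d9]
  have hlogx : log x ≤ x := (log_le_sub_one_of_pos (by linarith)).trans (by linarith)
  have hm : (m : ℝ) ≤ 14 * x := by
    have : (m : ℝ) < 4 * π * x + 1 := Nat.ceil_lt_add_one (by positivity)
    nlinarith [pi_lt_d2]
  have hm₀ : (0 : ℝ) < m := by
    have : 4 * π * x ≤ m := Nat.le_ceil _
    nlinarith [pi_pos]
  have hn : (n : ℝ) ≤ 1001 * x ^ 2 := by
    have : (n : ℝ) < 1000 * x * log x + 1 := Nat.ceil_lt_add_one (by positivity)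
    nlinarith
  have hn_div : 71 * log x ≤ n / m := by
    rw [le_div_iff₀ hm₀]
    have : 1000 * x * log x ≤ n := Nat.le_ceil _
    nlinarith
  have hx68 : 14014 ≤ x ^ 68 :=
    calc (14014 : ℝ) ≤ 2 ^ 68 := by norm_num
      _ ≤ x ^ 68 := by gcongr
  calc (m : ℝ) * n ≤ 14014 * x ^ 3 := by nlinarith
    _ ≤ x ^ 68 * x ^ 3 := by gcongr
    _ = exp (71 * log x) := by
        rw [← pow_add, ← exp_log (by linarith : 0 < x), ← exp_nat_mul, log_exp]
        norm_num
    _ ≤ exp (n / m) := exp_le_exp.2 hn_div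

lemma ofReal_one_sub_le_measure_forall_exists_ray {Ω ι : Type*} [MeasurableSpace Ω] [Fintype ι]
    {μ : Measure Ω} [IsProbabilityMeasure μ] {α : ι → Ω → ℝ} (hα : ∀ i, Measurable (α i))
    (hind : iIndepFun α μ)
    (hunif : ∀ i, μ.map (α i) = (ENNReal.ofReal (2 * π))⁻¹ • volume.restrict (Set.Ico 0 (2 * π)))
    {D Δ : ℝ} {m : ℕ} (hm : 0 < m) (hmΔ : 4 * π * D ≤ m * Δ) :
    ENNReal.ofReal (1 - m * (1 - 1 / m) ^ Fintype.card ι) ≤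
      μ {ω | ∀ p : EuclideanSpace ℝ (Fin 2), ‖p‖ = D →
        ∃ i, ∃ t : ℝ, 0 ≤ t ∧ t • rayDir (α i ω) ∈ Metric.closedBall p (Δ / 2)} := by
  set unhit := ⋃ j : Fin m, ⋂ i, α i ⁻¹' (arc m j)ᶜ
  have hunhit : MeasurableSet unhit :=
    .iUnion fun j => .iInter fun i => hα i (measurableSet_arc m j).compl
  have hcover : unhitᶜ ⊆ {ω | ∀ p : EuclideanSpace ℝ (Fin 2), ‖p‖ = D →
      ∃ i, ∃ t : ℝ, 0 ≤ t ∧ t • rayDir (α i ω) ∈ Metric.closedBall p (Δ / 2)} := by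
    intro ω hω p hp
    refine exists_smul_rayDir_mem_closedBall_of_forall_arc (α · ω) hm (fun j hj => ?_) (hp ▸ hmΔ)
    by_contra! hmiss
    exact hω (Set.mem_iUnion.2 ⟨⟨j, hj⟩, Set.mem_iInter.2 hmiss⟩)
  calc ENNReal.ofReal (1 - m * (1 - 1 / m) ^ Fintype.card ι)
      = 1 - ENNReal.ofReal (m * (1 - 1 / m) ^ Fintype.card ι) := by
        have := one_sub_one_div_natCast_nonneg m
        rw [ENNReal.ofReal_sub _ (by positivity), ENNReal.ofReal_one]
    _ ≤ 1 - μ unhit := tsub_le_tsub_left (measure_exists_arc_unhit_le hα hind hunif m) 1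
    _ = μ unhitᶜ := (prob_compl_eq_one_sub hunhit).symm
    _ ≤ _ := measure_mono hcover

/-- There is a constant `C > 0` such that for all `0 < Δ ≤ D/2`, with
`n = ⌈C (D/Δ) log (D/Δ)⌉` independent spoke angles uniform on `[0, 2π)`, with probability
at least `1 - 1/n`, for every point `p` with `‖p‖ = D` some of the `n` rays from the
origin intersects the closed ball of radius `Δ/2` around `p`. -/
theorem bCPFA_discovery_whp :
    ∃ C : ℝ, 0 < C ∧ ∀ D Δ : ℝ, 0 < Δ → Δ ≤ D / 2 →
      ∀ (Ω : Type) (_ : MeasureSpace Ω) (_ : IsProbabilityMeasure (volume : Measure Ω))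
        (α : Fin ⌈C * (D / Δ) * Real.log (D / Δ)⌉₊ → Ω → ℝ),
        (∀ i, Measurable (α i)) →
        iIndepFun α volume →
        (∀ i, Measure.map (α i) volume =
          (ENNReal.ofReal (2 * Real.pi))⁻¹ • volume.restrict (Set.Ico (0 : ℝ) (2 * Real.pi))) →
        ENNReal.ofReal (1 - 1 / (⌈C * (D / Δ) * Real.log (D / Δ)⌉₊ : ℝ)) ≤
          volume {ω : Ω | ∀ p : EuclideanSpace ℝ (Fin 2), ‖p‖ = D →
            ∃ i, ∃ t : ℝ, 0 ≤ t ∧ t • rayDir (α i ω) ∈ Metric.closedBall p (Δ / 2)} := by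
  refine ⟨1000, by norm_num, fun D Δ hΔ hΔD Ω _ _ α hα hind hunif => ?_⟩
  have hx : 2 ≤ D / Δ := (le_div_iff₀ hΔ).2 (by linarith)
  set x := D / Δ
  set m := ⌈4 * π * x⌉₊
  set n := ⌈1000 * x * log x⌉₊
  have hm : 0 < m := Nat.ceil_pos.2 (by positivity)
  have hn : 0 < n := Nat.ceil_pos.2 (by have := log_pos (by linarith : 1 < x); positivity)
  have hmΔ : 4 * π * D ≤ m * Δ := by
    rw [← div_mul_cancel₀ D hΔ.ne', ← mul_assoc]
    gcongr
    exact Nat.le_ceil _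
  have hsmall := mul_one_sub_one_div_pow_le_one_div hn (natCeil_mul_natCeil_le_exp_div hx)
  calc ENNReal.ofReal (1 - 1 / n) ≤ ENNReal.ofReal (1 - m * (1 - 1 / m) ^ n) := by
        gcongr
    _ ≤ _ := by
        simpa only [Fintype.card_fin] using
          ofReal_one_sub_le_measure_forall_exists_ray hα hind hunif hm hmΔ
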